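/- arXiv:1005.2430 — 4 statements merged into one kernel-verified Lean document; each statement's English description precedes it below -/
import Mathlib

section
/- Let M be a compact Hausdorff space, let A and B be unital complex Banach algebras, let φ : A → B be a unital continuous algebra homomorphism whose range φ(A) is dense in B, and let X be a dense subalgebra of A. Then the set {φ ∘ f : f ∈ C(M,A) with f(t) ∈ X for all t ∈ M} is dense in the Banach algebra C(M,B) (with the supremum norm). In particular, the induced homomorphism φ_M : C(M,A) → C(M,B), (φ_M f)(t) = φ(f(t)), has dense range. -/
open Set Metric

/-- Let M be a compact Hausdorff space, A, B unital complex Banach algebras,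
φ : A → B a unital continuous algebra homomorphism with dense range, and X a dense
subalgebra of A.  Then `{φ ∘ f : f ∈ C(M, A), f(t) ∈ X for all t}` is dense in the
Banach algebra `C(M, B)` (with the supremum norm); in particular the induced
homomorphism `φ_M : C(M, A) → C(M, B)` has dense range. -/
theorem dense_range_induced_on_continuousMaps
    {M A B : Type*} [TopologicalSpace M] [CompactSpace M] [T2Space M]
    [NormedRing A] [NormedAlgebra ℂ A] [CompleteSpace A]
    [NormedRing B] [NormedAlgebra ℂ B] [CompleteSpace B]
    (φ : A →ₐ[ℂ] B) (hφ : Continuous φ) (hφdense : DenseRange φ)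
    (X : Subalgebra ℂ A) (hX : Dense (X : Set A)) :
    Dense {g : C(M, B) | ∃ f : C(M, A), (∀ t, f t ∈ X) ∧ ∀ t, g t = φ (f t)} := by
  have hD : Dense (φ '' (X : Set A)) := hφdense.dense_image hφ hX
  have hsmul : ∀ (r : ℝ) (a : A), φ (r • a) = r • φ a := fun r a => by
    rw [← algebraMap_smul ℂ r a, map_smul, algebraMap_smul]
  rw [Metric.dense_iff]
  intro g ε hε
  have hε3 : (0:ℝ) < ε/3 := by positivity
  have hx : ∀ t : M, ∃ a : A, a ∈ X ∧ dist (φ a) (g t) < ε/3 := by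
    intro t
    obtain ⟨y, hy, hdy⟩ := hD.exists_dist_lt (g t) hε3
    obtain ⟨a, haX, rfl⟩ := hy
    exact ⟨a, haX, by rwa [dist_comm]⟩
  choose x hxX hxd using hx
  set U : M → Set M := fun t => g ⁻¹' Metric.ball (g t) (ε/3) with hUdef
  have hUopen : ∀ t, IsOpen (U t) := fun t => Metric.isOpen_ball.preimage g.continuous
  have hUcover : (univ : Set M) ⊆ ⋃ t, U t := by
    intro t _
    exact Set.mem_iUnion.2 ⟨t, by simp [hUdef, Metric.mem_ball, hε3]⟩
  obtain ⟨τ, hτ⟩ := isCompact_univ.elim_finite_subcover U hUopen hUcover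
  have hτcover : (univ : Set M) ⊆ ⋃ i : τ, U i := by
    simpa [Set.iUnion_subtype] using hτ
  obtain ⟨p, hp⟩ := PartitionOfUnity.exists_isSubordinate isClosed_univ
    (fun i : τ => U i) (fun i => hUopen i) hτcover
  have hfcont : Continuous fun s : M => ∑ i : τ, p i s • x i := by
    apply continuous_finset_sum
    intro i _
    exact ((p i).continuous).smul continuous_const
  set f : C(M, A) := ⟨fun s => ∑ i : τ, p i s • x i, hfcont⟩ with hfdef
  have hfX : ∀ t, f t ∈ X := by
    intro t
    apply Subalgebra.sum_mem
    intro i _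
    have : (p i t) • x i = ((algebraMap ℝ ℂ (p i t))) • x i := (algebraMap_smul ℂ _ _).symm
    rw [this]
    exact X.smul_mem (hxX i) _
  refine ⟨⟨fun t => φ (f t), hφ.comp f.continuous⟩, ?_, f, hfX, fun t => rfl⟩
  rw [Metric.mem_ball, ContinuousMap.dist_lt_iff hε]
  intro t
  have hsum1 : ∑ i : τ, p i t = 1 := by
    have := p.sum_eq_one (Set.mem_univ t)
    rwa [finsum_eq_sum_of_fintype] at this
  have hgt : g t = ∑ i : τ, p i t • g t := by
    rw [← Finset.sum_smul, hsum1, one_smul]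
  have hφf : φ (f t) = ∑ i : τ, p i t • φ (x i) := by
    simp only [hfdef, ContinuousMap.coe_mk, map_sum]
    exact Finset.sum_congr rfl fun i _ => hsmul _ _
  calc dist ((⟨fun t => φ (f t), hφ.comp f.continuous⟩ : C(M,B)) t) (g t)
      = ‖∑ i : τ, p i t • (φ (x i) - g t)‖ := by
        rw [dist_eq_norm]
        congr 1
        rw [ContinuousMap.coe_mk, hφf]
        simp only [smul_sub, Finset.sum_sub_distrib, ← Finset.sum_smul, hsum1, one_smul]
    _ ≤ ∑ i : τ, ‖p i t • (φ (x i) - g t)‖ := norm_sum_le _ _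
    _ ≤ ∑ i : τ, p i t * (2*ε/3) := by
        apply Finset.sum_le_sum
        intro i _
        rw [norm_smul, Real.norm_eq_abs, abs_of_nonneg (p.nonneg i t)]
        rcases eq_or_ne (p i t) 0 with h0 | h0
        · simp [h0]
        · apply mul_le_mul_of_nonneg_left _ (p.nonneg i t)
          have htU : t ∈ U i := hp i (subset_tsupport _ h0)
          have h1 : dist (g t) (g (i : M)) < ε/3 := by
            simpa [hUdef, Metric.mem_ball] using htU
          have h2 : dist (φ (x i)) (g (i : M)) < ε/3 := hxd i
          calc ‖φ (x i) - g t‖ = dist (φ (x i)) (g t) := (dist_eq_norm _ _).symm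
            _ ≤ dist (φ (x i)) (g (i : M)) + dist (g (i : M)) (g t) := dist_triangle _ _ _
            _ ≤ ε/3 + ε/3 := by rw [dist_comm (g (i:M))]; linarith
            _ = 2*ε/3 := by ring
    _ = 2*ε/3 := by rw [← Finset.sum_mul, hsum1, one_mul]
    _ < ε := by linarith
end

section
/- Let M be a nonempty compact Hausdorff space, let A and B be unital complex Banach algebras, let X be a dense subalgebra of A, and let φ : A → B be a unital continuous algebra homomorphism with dense range that is relatively spectral to X (i.e., sp_B(φ(x)) = sp_A(x) for every x ∈ X). Then for every continuous function f : M → A with f(t) ∈ X for all t ∈ M, the spectrum of φ ∘ f in the Banach algebra C(M,B) equals the spectrum of f in the Banach algebra C(M,A); in particular, if φ ∘ f is invertible in C(M,B), then f is invertible in C(M,A). -/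
/-- If φ : A → B is a unital continuous homomorphism of unital complex Banach algebras,
with dense range and relatively spectral to a dense subalgebra X of A, and M is a
nonempty compact Hausdorff space, then for every continuous f : M → A with values in X,
the spectrum of φ ∘ f in C(M, B) equals the spectrum of f in C(M, A); in particular
if φ ∘ f is invertible in C(M, B) then f is invertible in C(M, A). -/
theorem relSpectral_induced_on_continuousMaps
    {M A B : Type*} [TopologicalSpace M] [CompactSpace M] [T2Space M] [Nonempty M]
    [NormedRing A] [NormedAlgebra ℂ A] [CompleteSpace A]
    [NormedRing B] [NormedAlgebra ℂ B] [CompleteSpace B]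
    (φ : A →ₐ[ℂ] B) (hφ : Continuous φ) (hφdense : DenseRange φ)
    (X : Subalgebra ℂ A) (hX : Dense (X : Set A))
    (hrs : ∀ x ∈ X, spectrum ℂ (φ x) = spectrum ℂ x)
    (f : C(M, A)) (hf : ∀ t, f t ∈ X) :
    spectrum ℂ ((⟨fun t => φ (f t), hφ.comp f.continuous⟩ : C(M, B)))
        = spectrum ℂ f ∧
      (IsUnit (⟨fun t => φ (f t), hφ.comp f.continuous⟩ : C(M, B)) → IsUnit f) := by
  have key : ∀ (lam : ℂ) (t : M),
      IsUnit (algebraMap ℂ B lam - φ (f t)) ↔ IsUnit (algebraMap ℂ A lam - f t) := by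
    intro lam t
    have h1 : lam ∈ spectrum ℂ (φ (f t)) ↔ lam ∈ spectrum ℂ (f t) := by
      rw [hrs (f t) (hf t)]
    simpa [spectrum.mem_iff, not_iff_not] using h1.not
  have halgA : ∀ (lam : ℂ) (t : M), ((algebraMap ℂ C(M, A)) lam) t = algebraMap ℂ A lam :=
    fun _ _ => rfl
  have halgB : ∀ (lam : ℂ) (t : M), ((algebraMap ℂ C(M, B)) lam) t = algebraMap ℂ B lam :=
    fun _ _ => rfl
  have hspec : spectrum ℂ ((⟨fun t => φ (f t), hφ.comp f.continuous⟩ : C(M, B)))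
      = spectrum ℂ f := by
    ext lam
    simp only [spectrum.mem_iff, not_iff_not,
      ContinuousMap.isUnit_iff_forall_isUnit]
    constructor
    · intro h t
      have := h t
      simp only [ContinuousMap.sub_apply, ContinuousMap.coe_mk, halgA, halgB] at this ⊢
      exact (key lam t).mp this
    · intro h t
      have := h t
      simp only [ContinuousMap.sub_apply, ContinuousMap.coe_mk, halgA, halgB] at this ⊢
      exact (key lam t).mpr this
  refine ⟨hspec, fun h => ?_⟩
  rw [ContinuousMap.isUnit_iff_forall_isUnit] at h ⊢
  intro t
  have ht := h t
  simp only [ContinuousMap.coe_mk] at ht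
  have k0 := key 0 t
  simp only [map_zero, zero_sub] at k0
  simpa using (k0.mp (by simpa using ht.neg)).neg
end

section
/- Let A and B be unital complex Banach algebras, let X be a dense subalgebra of A, and let φ : A → B be a unital continuous algebra homomorphism with dense range that is relatively spectral to X (i.e., sp_B(φ(x)) = sp_A(x) for every x ∈ X). If a ∈ X satisfies ‖1_B − φ(a)‖ < 1, then a is invertible in A and a lies in the connected component of the identity in the group GL(A) of invertible elements of A. -/
/-- In a complex Banach algebra, if `‖1 - c‖ < 1` then every spectral value of `c`
lies in the open unit disk around `1`. -/
lemma spectrum_norm_sub_one_lt {C : Type*} [NormedRing C] [NormedAlgebra ℂ C]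
    [CompleteSpace C] (c : C) (h : ‖(1 : C) - c‖ < 1) :
    ∀ z ∈ spectrum ℂ c, ‖z - 1‖ < 1 := by
  intro z hz
  by_contra hge
  push_neg at hge
  have hz1 : z - 1 ≠ 0 := by
    intro h0
    rw [h0, norm_zero] at hge; linarith
  have hlt : ‖(z - 1)⁻¹ • ((1 : C) - c)‖ < 1 := by
    rw [norm_smul, norm_inv]
    calc ‖z - 1‖⁻¹ * ‖(1 : C) - c‖ ≤ 1 * ‖(1 : C) - c‖ := by
          apply mul_le_mul_of_nonneg_right _ (norm_nonneg _)
          rw [inv_le_one_iff₀]; right; exact hge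
      _ < 1 := by simpa using h
  have hu1 : IsUnit ((1 : C) + (z - 1)⁻¹ • ((1 : C) - c)) := by
    exact ⟨Units.oneSub (-((z - 1)⁻¹ • ((1 : C) - c))) (by rwa [norm_neg]),
      by rw [Units.val_oneSub, sub_neg_eq_add]⟩
  have hu2 : IsUnit (algebraMap ℂ C z - c) := by
    have key : algebraMap ℂ C z - c
        = (z - 1) • ((1 : C) + (z - 1)⁻¹ • ((1 : C) - c)) := by
      rw [smul_add, smul_smul, mul_inv_cancel₀ hz1, one_smul,
        Algebra.algebraMap_eq_smul_one]
      module
    rw [key, Algebra.smul_def]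
    exact ((hz1.isUnit).map (algebraMap ℂ C)).mul hu1
  exact (spectrum.notMem_iff.mpr hu2) hz

/-- If φ : A → B is a unital continuous homomorphism of unital complex Banach algebras,
with dense range and relatively spectral to a dense subalgebra X of A, and a ∈ X
satisfies ‖1 - φ(a)‖ < 1, then a is invertible in A and lies in the connected component
of the identity of GL(A). -/
theorem mem_connectedComponent_one_of_norm_lt_one
    {A B : Type*}
    [NormedRing A] [NormedAlgebra ℂ A] [CompleteSpace A]
    [NormedRing B] [NormedAlgebra ℂ B] [CompleteSpace B]
    (φ : A →ₐ[ℂ] B) (hφ : Continuous φ) (hφdense : DenseRange φ)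
    (X : Subalgebra ℂ A) (hX : Dense (X : Set A))
    (hrs : ∀ x ∈ X, spectrum ℂ (φ x) = spectrum ℂ x)
    (a : A) (ha : a ∈ X) (hnorm : ‖(1 : B) - φ a‖ < 1) :
    ∃ u : Aˣ, (u : A) = a ∧ u ∈ connectedComponent (1 : Aˣ) := by
  -- every spectral value of `a` is within distance 1 of `1`
  have hsp : ∀ z ∈ spectrum ℂ a, ‖z - 1‖ < 1 := by
    rw [← hrs a ha]
    exact spectrum_norm_sub_one_lt (φ a) hnorm
  -- key invertibility: `1 + t • (a - 1)` is a unit for `‖t‖ ≤ 1`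
  have key : ∀ t : ℂ, ‖t‖ ≤ 1 → IsUnit ((1 : A) + t • (a - 1)) := by
    intro t ht
    rcases eq_or_ne t 0 with rfl | htne
    · simp
    · have hz : (1 - t⁻¹) ∉ spectrum ℂ a := by
        intro hmem
        have := hsp _ hmem
        rw [sub_sub_cancel_left, norm_neg, norm_inv] at this
        have hpos : 0 < ‖t‖ := norm_pos_iff.mpr htne
        have hmul : ‖t‖⁻¹ * ‖t‖ = 1 := inv_mul_cancel₀ (ne_of_gt hpos)
        nlinarith
      have hu : IsUnit (algebraMap ℂ A (1 - t⁻¹) - a) := spectrum.notMem_iff.mp hz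
      have key2 : (1 : A) + t • (a - 1)
          = (-t) • (algebraMap ℂ A (1 - t⁻¹) - a) := by
        have hc : -t * (1 - t⁻¹) = 1 - t := by field_simp; ring
        rw [Algebra.algebraMap_eq_smul_one]
        simp only [smul_sub, smul_smul]
        rw [hc]
        module
      rw [key2, Algebra.smul_def]
      exact ((neg_ne_zero.mpr htne).isUnit.map (algebraMap ℂ A)).mul hu
  have h1 : IsUnit a := by
    have := key 1 (by simp)
    simpa using this
  -- build a path in the units from 1 to a
  have hf : ∀ t : unitInterval, IsUnit ((1 : A) + (((t : ℝ) : ℂ)) • (a - 1)) := by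
    intro t
    refine key _ ?_
    rw [Complex.norm_real, Real.norm_eq_abs, abs_of_nonneg t.2.1]
    exact t.2.2
  let g : unitInterval → Aˣ := fun t => (hf t).unit
  have hgval : ∀ t, (g t : A) = (1 : A) + (((t : ℝ) : ℂ)) • (a - 1) :=
    fun t => (hf t).unit_spec
  have hgc : Continuous g := by
    rw [Units.isOpenEmbedding_val.toIsEmbedding.continuous_iff]
    have : (Units.val ∘ g) = fun t : unitInterval =>
        (1 : A) + (((t : ℝ) : ℂ)) • (a - 1) := funext hgval
    rw [this]
    exact continuous_const.add
      (((Complex.continuous_ofReal.comp continuous_subtype_val)).smul continuous_const)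
  have hjoined : Joined (1 : Aˣ) h1.unit := by
    refine ⟨⟨⟨g, hgc⟩, ?_, ?_⟩⟩
    · ext; simp [hgval 0]
    · ext; simp [hgval 1, h1.unit_spec]
  exact ⟨h1.unit, h1.unit_spec, pathComponent_subset_component _ hjoined⟩
end

section
/- Let A and B be unital complex Banach algebras, let X be a dense subalgebra of A, and let φ : A → B be a unital continuous algebra homomorphism with dense range that is relatively spectral to X (i.e., sp_B(φ(x)) = sp_A(x) for every x ∈ X). Then for every invertible element b of B there exists a ∈ X such that a is invertible in A and φ(a) lies in the same connected component of GL(B) as b. In other words, the induced map GL(A)/GL_0(A) → GL(B)/GL_0(B) is surjective. -/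
/-! The connected component of `b` in `GL(B)` is open in `B`, because `GL(B)` is an open subset
of the locally connected space `B`. It therefore meets the dense set `φ(X)`, say in `φ(x)`, and
`x` is invertible because `x` and `φ(x)` have the same spectrum, which does not contain `0`. -/

instance Units.instLocallyConnectedSpace {R : Type*} [NormedRing R] [HasSummableGeomSeries R]
    [LocallyConnectedSpace R] : LocallyConnectedSpace Rˣ :=
  Units.isOpenEmbedding_val.locallyConnectedSpace

theorem Units.isOpen_image_val_connectedComponent {R : Type*} [NormedRing R]
    [HasSummableGeomSeries R] [LocallyConnectedSpace R] (u : Rˣ) :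
    IsOpen ((↑) '' connectedComponent u : Set R) :=
  Units.isOpenMap_val _ isOpen_connectedComponent

theorem AlgHom.isUnit_of_isUnit_apply_of_spectrum_subset {𝕜 A B : Type*} [Field 𝕜] [Ring A]
    [Ring B] [Algebra 𝕜 A] [Algebra 𝕜 B] (φ : A →ₐ[𝕜] B) {x : A}
    (hsp : spectrum 𝕜 x ⊆ spectrum 𝕜 (φ x)) (hx : IsUnit (φ x)) : IsUnit x := by
  rw [← spectrum.zero_notMem_iff 𝕜] at hx ⊢
  exact fun h ↦ hx (hsp h)

theorem induced_map_on_components_surjective_general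
    {A B : Type*}
    [NormedRing A] [NormedAlgebra ℂ A]
    [NormedRing B] [NormedAlgebra ℂ B] [CompleteSpace B]
    (φ : A →ₐ[ℂ] B) (hφ : Continuous φ) (hφdense : DenseRange φ)
    (X : Subalgebra ℂ A) (hX : Dense (X : Set A))
    (hrs : ∀ x ∈ X, spectrum ℂ (φ x) = spectrum ℂ x) :
    ∀ b : Bˣ, ∃ a ∈ X, ∃ u : Aˣ, (u : A) = a ∧
      ∃ v : Bˣ, (v : B) = φ a ∧ v ∈ connectedComponent b := by
  intro b
  obtain ⟨_, ⟨v, hv, rfl⟩, x, hxX, hxv⟩ :=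
    (hφdense.dense_image hφ hX).inter_open_nonempty _
      (Units.isOpen_image_val_connectedComponent b) ⟨b, b, mem_connectedComponent, rfl⟩
  have hx : IsUnit x :=
    φ.isUnit_of_isUnit_apply_of_spectrum_subset (hrs x hxX).ge (hxv ▸ v.isUnit)
  exact ⟨x, hxX, hx.unit, rfl, v, hxv.symm, hv⟩

/-- If φ : A → B is a unital continuous homomorphism of unital complex Banach algebras,
with dense range and relatively spectral to a dense subalgebra X of A, then for every
invertible b ∈ B there is a ∈ X, invertible in A, such that φ(a) lies in the same
connected component of GL(B) as b; i.e. the induced map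
GL(A)/GL₀(A) → GL(B)/GL₀(B) is surjective. -/
theorem induced_map_on_components_surjective
    {A B : Type*}
    [NormedRing A] [NormedAlgebra ℂ A] [CompleteSpace A]
    [NormedRing B] [NormedAlgebra ℂ B] [CompleteSpace B]
    (φ : A →ₐ[ℂ] B) (hφ : Continuous φ) (hφdense : DenseRange φ)
    (X : Subalgebra ℂ A) (hX : Dense (X : Set A))
    (hrs : ∀ x ∈ X, spectrum ℂ (φ x) = spectrum ℂ x) :
    ∀ b : Bˣ, ∃ a ∈ X, ∃ u : Aˣ, (u : A) = a ∧
      ∃ v : Bˣ, (v : B) = φ a ∧ v ∈ connectedComponent b :=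
  induced_map_on_components_surjective_general φ hφ hφdense X hX hrs
end
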